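/- arXiv:1111.4031 — 4 statements merged into one kernel-verified Lean document; each statement's English description precedes it below -/
import Mathlib

section
/- Let Q be a polynomial of degree d and ν a real number. Then there exists a polynomial P of degree at most d+1 such that Δ(Q(|x|²)(1+|x|²)^ν) = P(|x|²)(1+|x|²)^(ν−2) for all x in ℝ^p, where Δ is the Euclidean Laplacian on ℝ^p. -/
/-!
For a radial function, `Δ (f (|x|²)) = 4 s f''(s) + 2 p f'(s)` with `s = |x|²`. Differentiating
`R(u) (1 + u)^μ` gives `((1 + u) R' + μ R)(u) (1 + u)^(μ - 1)`, and this operation on `R` does not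
raise the degree. Applying it twice to `Q` and clearing the factors `s` and `1 + s` against the
powers of `1 + s` leaves a polynomial of degree at most `d + 1`.
-/

open Real

/-- The Euclidean Laplacian on `ℝ^p`: sum of second partial derivatives. -/
noncomputable def laplacian {p : ℕ} (f : (Fin p → ℝ) → ℝ) (x : Fin p → ℝ) : ℝ :=
  ∑ i, iteratedDeriv 2 (fun t => f (Function.update x i t)) (x i)

open Polynomial

lemma sum_sq_update {p : ℕ} (x : Fin p → ℝ) (i : Fin p) (t : ℝ) :
    ∑ j, Function.update x i t j ^ 2 = (∑ j, x j ^ 2 - x i ^ 2) + t ^ 2 := by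
  rw [← Finset.add_sum_erase _ _ (Finset.mem_univ i),
    ← Finset.add_sum_erase _ _ (Finset.mem_univ i),
    Finset.sum_congr rfl fun j hj => by rw [Function.update_of_ne (Finset.ne_of_mem_erase hj)]]
  simp only [Function.update_self]
  ring

lemma iteratedDeriv_two_comp_add_sq {f f' f'' : ℝ → ℝ}
    (hf : ∀ u, 0 ≤ u → HasDerivAt f (f' u) u)
    (hf' : ∀ u, 0 ≤ u → HasDerivAt f' (f'' u) u)
    {c : ℝ} (hc : 0 ≤ c) (t : ℝ) :
    iteratedDeriv 2 (fun t => f (c + t ^ 2)) t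
      = 4 * t ^ 2 * f'' (c + t ^ 2) + 2 * f' (c + t ^ 2) := by
  have hsq : ∀ t : ℝ, HasDerivAt (fun t => c + t ^ 2) (2 * t) t := fun t => by
    simpa using (hasDerivAt_pow 2 t).const_add c
  have hpos : ∀ t : ℝ, 0 ≤ c + t ^ 2 := fun t => by positivity
  have hderiv : deriv (fun t => f (c + t ^ 2)) = fun t => f' (c + t ^ 2) * (2 * t) :=
    funext fun t => ((hf _ (hpos t)).comp t (hsq t)).deriv
  have hderiv2 : HasDerivAt (fun t => f' (c + t ^ 2) * (2 * t))
      (f'' (c + t ^ 2) * (2 * t) * (2 * t) + f' (c + t ^ 2) * 2) t :=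
    ((hf' _ (hpos t)).comp t (hsq t)).mul (by simpa using (hasDerivAt_id t).const_mul 2)
  rw [iteratedDeriv_succ', iteratedDeriv_one, hderiv, hderiv2.deriv]
  ring

lemma laplacian_comp_sum_sq {p : ℕ} {f f' f'' : ℝ → ℝ}
    (hf : ∀ u, 0 ≤ u → HasDerivAt f (f' u) u)
    (hf' : ∀ u, 0 ≤ u → HasDerivAt f' (f'' u) u)
    (x : Fin p → ℝ) :
    laplacian (fun y => f (∑ i, y i ^ 2)) x
      = 4 * (∑ i, x i ^ 2) * f'' (∑ i, x i ^ 2) + 2 * p * f' (∑ i, x i ^ 2) := by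
  set s := ∑ i, x i ^ 2
  have hc : ∀ i, 0 ≤ s - x i ^ 2 := fun i => sub_nonneg.mpr <|
    Finset.single_le_sum (fun j _ => sq_nonneg (x j)) (Finset.mem_univ i)
  have hterm : ∀ i, iteratedDeriv 2 (fun t => f (∑ j, Function.update x i t j ^ 2)) (x i)
      = 4 * x i ^ 2 * f'' s + 2 * f' s := fun i => by
    simp only [sum_sq_update]
    rw [iteratedDeriv_two_comp_add_sq hf hf' (hc i), sub_add_cancel]
  simp only [laplacian, hterm]
  rw [Finset.sum_add_distrib, ← Finset.sum_mul, ← Finset.mul_sum, Finset.sum_const,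
    Finset.card_univ, Fintype.card_fin, nsmul_eq_mul]
  ring

noncomputable def twistedDerivative (μ : ℝ) (R : ℝ[X]) : ℝ[X] :=
  derivative R * (1 + X) + C μ * R

lemma natDegree_twistedDerivative_le (μ : ℝ) (R : ℝ[X]) :
    (twistedDerivative μ R).natDegree ≤ R.natDegree := by
  refine (natDegree_add_le _ _).trans (max_le ?_ (natDegree_C_mul_le _ _))
  rcases eq_or_ne R.natDegree 0 with h | h
  · simp [derivative_of_natDegree_zero h]
  · have h1 : (1 + X : ℝ[X]).natDegree ≤ 1 := by compute_degree
    have h2 := natDegree_derivative_lt h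
    exact natDegree_mul_le.trans (by omega)

lemma hasDerivAt_eval_mul_rpow (R : ℝ[X]) (μ : ℝ) {u : ℝ} (hu : 0 < 1 + u) :
    HasDerivAt (fun u => R.eval u * (1 + u) ^ μ)
      ((twistedDerivative μ R).eval u * (1 + u) ^ (μ - 1)) u := by
  have hpow : HasDerivAt (fun u => (1 + u) ^ μ) (μ * (1 + u) ^ (μ - 1)) u := by
    simpa using ((hasDerivAt_id u).const_add 1).rpow_const (p := μ) (Or.inl hu.ne')
  refine ((R.hasDerivAt u).mul hpow).congr_deriv ?_
  rw [rpow_sub_one hu.ne']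
  simp only [twistedDerivative, eval_add, eval_mul, eval_C, eval_one, eval_X]
  field_simp

theorem laplacian_poly_rpow_general {p : ℕ} (Q : Polynomial ℝ) (d : ℕ)
    (hQ : Q.natDegree = d) (ν : ℝ) :
    ∃ P : Polynomial ℝ, P.natDegree ≤ d + 1 ∧
      ∀ x : Fin p → ℝ,
        laplacian (fun y => Q.eval (∑ i, y i ^ 2) * (1 + ∑ i, y i ^ 2) ^ ν) x
          = P.eval (∑ i, x i ^ 2) * (1 + ∑ i, x i ^ 2) ^ (ν - 2) := by
  refine ⟨C 4 * X * twistedDerivative (ν - 1) (twistedDerivative ν Q)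
      + C (2 * (p : ℝ)) * (1 + X) * twistedDerivative ν Q, ?_, fun x => ?_⟩
  · have h₁ := hQ ▸ natDegree_twistedDerivative_le ν Q
    have h₂ := (natDegree_twistedDerivative_le (ν - 1) _).trans h₁
    have hX : (C 4 * X : ℝ[X]).natDegree ≤ 1 := by compute_degree
    have hX' : (C (2 * (p : ℝ)) * (1 + X)).natDegree ≤ 1 := by compute_degree
    exact (natDegree_add_le _ _).trans
      (max_le (natDegree_mul_le.trans (by omega)) (natDegree_mul_le.trans (by omega)))
  · have hpos : ∀ u : ℝ, 0 ≤ u → 0 < 1 + u := fun u hu => by linarith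
    rw [laplacian_comp_sum_sq (fun u hu => hasDerivAt_eval_mul_rpow Q ν (hpos u hu))
      (fun u hu => hasDerivAt_eval_mul_rpow (twistedDerivative ν Q) (ν - 1) (hpos u hu))]
    set s := ∑ i, x i ^ 2
    have hs := hpos s (Finset.sum_nonneg fun i _ => sq_nonneg (x i))
    have hexp : (1 + s) ^ (ν - 1) = (1 + s) ^ (ν - 2) * (1 + s) := by
      rw [← rpow_add_one hs.ne']
      congr 1
      ring
    rw [sub_sub, one_add_one_eq_two, hexp]
    simp only [eval_add, eval_mul, eval_C, eval_one, eval_X]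
    ring

/-- for a polynomial `Q` of degree `d` and `ν ∈ ℝ`, there is a
polynomial `P` of degree at most `d+1` with
`Δ(Q(|x|²)(1+|x|²)^ν) = P(|x|²)(1+|x|²)^(ν-2)` on `ℝ^p`. -/
theorem laplacian_poly_rpow {p : ℕ} (hp : 1 ≤ p) (Q : Polynomial ℝ) (d : ℕ)
    (hQ : Q.natDegree = d) (ν : ℝ) :
    ∃ P : Polynomial ℝ, P.natDegree ≤ d + 1 ∧
      ∀ x : Fin p → ℝ,
        laplacian (fun y => Q.eval (∑ i, y i ^ 2) * (1 + ∑ i, y i ^ 2) ^ ν) x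
          = P.eval (∑ i, x i ^ 2) * (1 + ∑ i, x i ^ 2) ^ (ν - 2) :=
  laplacian_poly_rpow_general Q d hQ ν
end

section
/- Let a, b, c, d, γ > 0 be real numbers with c/a + d/b < γ. Then the double integral ∫₀^∞ ∫₀^∞ (1 + x^a + y^b)^(−γ) x^(c−1) y^(d−1) dx dy is finite. -/
/-!
Since `1 + x^a + y^b` dominates both `1 + x^a` and `1 + y^b`, splitting `γ = γ₁ + γ₂` with
`c/a < γ₁` and `d/b < γ₂` bounds the integrand by the product of `(1 + x^a)^(-γ₁) x^(c-1)` and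
`(1 + y^b)^(-γ₂) y^(d-1)`. Each factor is integrable on `(0, ∞)`: on `(0, 1]` it is at most
`x^(c-1)` with `c > 0`, and on `(1, ∞)` at most `x^(c-1-aγ₁)` with `c - aγ₁ < 0`.
-/

open Real MeasureTheory Set

section OneAddRpow

variable {p s γ : ℝ}

lemma integrableOn_Ioc_zero_one_one_add_rpow_neg_mul_rpow (hs : 0 < s) (hγ : 0 ≤ γ) :
    IntegrableOn (fun x : ℝ => (1 + x ^ p) ^ (-γ) * x ^ (s - 1)) (Ioc 0 1) := by
  have hint : IntegrableOn (fun x : ℝ => x ^ (s - 1)) (Ioc 0 1) := by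
    rw [← intervalIntegrable_iff_integrableOn_Ioc_of_le zero_le_one]
    exact intervalIntegral.intervalIntegrable_rpow' (by linarith)
  refine hint.mono' (by fun_prop : Measurable _).aestronglyMeasurable ?_
  filter_upwards [ae_restrict_mem measurableSet_Ioc] with x hx
  have hx0 : 0 < x := hx.1
  have hbase : 1 ≤ 1 + x ^ p := le_add_of_nonneg_right (rpow_nonneg hx0.le p)
  rw [norm_of_nonneg (by positivity)]
  exact mul_le_of_le_one_left (rpow_nonneg hx0.le _)
    (rpow_le_one_of_one_le_of_nonpos hbase (by linarith))

lemma integrableOn_Ioi_one_one_add_rpow_neg_mul_rpow (hγ : 0 ≤ γ) (h : s < p * γ) :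
    IntegrableOn (fun x : ℝ => (1 + x ^ p) ^ (-γ) * x ^ (s - 1)) (Ioi 1) := by
  have hint : IntegrableOn (fun x : ℝ => x ^ (s - 1 - p * γ)) (Ioi 1) :=
    integrableOn_Ioi_rpow_of_lt (by linarith) zero_lt_one
  refine hint.mono' (by fun_prop : Measurable _).aestronglyMeasurable ?_
  filter_upwards [ae_restrict_mem measurableSet_Ioi] with x hx
  have hx0 : 0 < x := zero_lt_one.trans hx
  rw [norm_of_nonneg (by positivity)]
  calc (1 + x ^ p) ^ (-γ) * x ^ (s - 1) ≤ (x ^ p) ^ (-γ) * x ^ (s - 1) :=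
        mul_le_mul_of_nonneg_right
          (rpow_le_rpow_of_nonpos (rpow_pos_of_pos hx0 p) (by linarith) (by linarith))
          (rpow_nonneg hx0.le _)
    _ = x ^ (s - 1 - p * γ) := by
        rw [← rpow_mul hx0.le, ← rpow_add hx0]
        ring_nf

lemma integrableOn_Ioi_zero_one_add_rpow_neg_mul_rpow (hs : 0 < s) (hγ : 0 ≤ γ)
    (h : s < p * γ) :
    IntegrableOn (fun x : ℝ => (1 + x ^ p) ^ (-γ) * x ^ (s - 1)) (Ioi 0) := by
  rw [← Ioc_union_Ioi_eq_Ioi zero_le_one]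
  exact (integrableOn_Ioc_zero_one_one_add_rpow_neg_mul_rpow hs hγ).union
    (integrableOn_Ioi_one_one_add_rpow_neg_mul_rpow hγ h)

end OneAddRpow

lemma one_add_add_rpow_neg_le {u v γ₁ γ₂ : ℝ} (hu : 0 ≤ u) (hv : 0 ≤ v) (hγ₁ : 0 ≤ γ₁)
    (hγ₂ : 0 ≤ γ₂) :
    (1 + u + v) ^ (-(γ₁ + γ₂)) ≤ (1 + u) ^ (-γ₁) * (1 + v) ^ (-γ₂) := by
  have huv : 0 < 1 + u + v := by positivity
  rw [neg_add, rpow_add huv]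
  exact mul_le_mul (rpow_le_rpow_of_nonpos (by positivity) (by linarith) (by linarith))
    (rpow_le_rpow_of_nonpos (by positivity) (by linarith) (by linarith))
    (by positivity) (by positivity)

theorem integrable_rpow_double_general (a b c d γ : ℝ) (ha : 0 < a) (hb : 0 < b)
    (hc : 0 < c) (hd : 0 < d) (h : c / a + d / b < γ) :
    IntegrableOn
      (fun z : ℝ × ℝ =>
        (1 + z.1 ^ a + z.2 ^ b) ^ (-γ) * z.1 ^ (c - 1) * z.2 ^ (d - 1))
      (Ioi (0:ℝ) ×ˢ Ioi (0:ℝ)) := by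
  obtain ⟨γ₁, γ₂, hc₁, hd₂, hsum⟩ : ∃ γ₁ γ₂, c / a < γ₁ ∧ d / b < γ₂ ∧ γ₁ + γ₂ = γ :=
    ⟨(γ + c / a - d / b) / 2, (γ - c / a + d / b) / 2, by linarith, by linarith, by ring⟩
  have hγ₁ : 0 ≤ γ₁ := by linarith [div_pos hc ha]
  have hγ₂ : 0 ≤ γ₂ := by linarith [div_pos hd hb]
  have hprod := (integrableOn_Ioi_zero_one_add_rpow_neg_mul_rpow hc hγ₁
    ((div_lt_iff₀' ha).mp hc₁)).mul_prod
    (integrableOn_Ioi_zero_one_add_rpow_neg_mul_rpow hd hγ₂ ((div_lt_iff₀' hb).mp hd₂))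
  rw [Measure.prod_restrict, ← Measure.volume_eq_prod] at hprod
  refine hprod.mono' (by fun_prop : Measurable _).aestronglyMeasurable ?_
  filter_upwards [ae_restrict_mem (measurableSet_Ioi.prod measurableSet_Ioi)]
    with z ⟨hx, hy⟩
  rw [mem_Ioi] at hx hy
  have hsplit := one_add_add_rpow_neg_le (rpow_nonneg hx.le a) (rpow_nonneg hy.le b) hγ₁ hγ₂
  rw [hsum] at hsplit
  rw [norm_of_nonneg (by positivity)]
  calc _ ≤ (1 + z.1 ^ a) ^ (-γ₁) * (1 + z.2 ^ b) ^ (-γ₂) * z.1 ^ (c - 1) * z.2 ^ (d - 1) := by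
        gcongr
    _ = _ := by ring

/-- if `a,b,c,d,γ > 0` and `c/a + d/b < γ`, then
`∫₀^∞∫₀^∞ (1+x^a+y^b)^(-γ) x^(c-1) y^(d-1) dx dy < ∞`. -/
theorem integrable_rpow_double (a b c d γ : ℝ) (ha : 0 < a) (hb : 0 < b)
    (hc : 0 < c) (hd : 0 < d) (hγ : 0 < γ) (h : c / a + d / b < γ) :
    IntegrableOn
      (fun z : ℝ × ℝ =>
        (1 + z.1 ^ a + z.2 ^ b) ^ (-γ) * z.1 ^ (c - 1) * z.2 ^ (d - 1))
      (Ioi (0:ℝ) ×ˢ Ioi (0:ℝ)) :=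
  integrable_rpow_double_general a b c d γ ha hb hc hd h
end

section
/- Let a, b, c, d, γ > 0 and δ > 1 be real numbers with c/a + d/b = γ. Then the double integral ∫₀^∞ ∫₀^∞ (1 + x^a + y^b)^(−γ) (1 + log(1 + x^a + y^b))^(−δ) x^(c−1) y^(d−1) dx dy is finite. -/
open Real MeasureTheory Set

/-!
Integrate in `y` first. For fixed `x > 0` put `T = 1 + x ^ a`; the logarithmic factor is at
most `(1 + log T) ^ (-δ)`, and the substitution `y = T ^ (1 / b) * z` gives
`∫ (T + y ^ b) ^ (-γ) y ^ (d - 1) dy = T ^ (d / b - γ) K` with `K < ∞` because `d / b < γ`.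
As `d / b - γ = -(c / a)`, what remains is
`∫ x ^ (c - 1) (1 + x ^ a) ^ (-(c / a)) (1 + log (1 + x ^ a)) ^ (-δ) dx`, whose integrand is
`O(x ^ (c - 1))` at `0` and `O(x⁻¹ (1 + log x) ^ (-δ))` at `∞`; the latter is integrable
exactly because `δ > 1`.
-/

lemma integrableOn_Ioi_zero_of_le_rpow_of_le {f g : ℝ → ℝ} {C s : ℝ} (hs : 0 < s)
    (hf : Measurable f) (h₀ : ∀ x ∈ Ioc 0 1, ‖f x‖ ≤ C * x ^ (s - 1))
    (hg : IntegrableOn g (Ioi 1)) (h₁ : ∀ x ∈ Ioi 1, ‖f x‖ ≤ g x) :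
    IntegrableOn f (Ioi 0) := by
  rw [← Ioc_union_Ioi_eq_Ioi zero_le_one]
  refine IntegrableOn.union ?_ ?_
  · have hpow : IntegrableOn (fun x : ℝ => x ^ (s - 1)) (Ioc 0 1) := by
      simpa [intervalIntegrable_iff, uIoc_of_le zero_le_one] using
        intervalIntegral.intervalIntegrable_rpow' (a := 0) (b := 1) (r := s - 1) (by linarith)
    exact (hpow.const_mul C).mono' hf.aestronglyMeasurable
      ((ae_restrict_mem measurableSet_Ioc).mono h₀)
  · exact hg.mono' hf.aestronglyMeasurable ((ae_restrict_mem measurableSet_Ioi).mono h₁)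

lemma integrableOn_Ioi_add_rpow_neg_mul_rpow {b d γ T : ℝ} (hb : 0 < b) (hd : 0 < d)
    (hdγ : d / b < γ) (hT : 0 < T) :
    IntegrableOn (fun y : ℝ => (T + y ^ b) ^ (-γ) * y ^ (d - 1)) (Ioi 0) := by
  have hγ : 0 < γ := (div_pos hd hb).trans hdγ
  refine integrableOn_Ioi_zero_of_le_rpow_of_le hd (by fun_prop) (C := T ^ (-γ)) ?_
    (integrableOn_Ioi_rpow_of_lt (a := d - 1 - b * γ) ?_ one_pos) ?_
  · intro y ⟨hy, _⟩
    have hyb : 0 ≤ y ^ b := rpow_nonneg hy.le b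
    rw [norm_of_nonneg (by positivity)]
    exact mul_le_mul_of_nonneg_right (rpow_le_rpow_of_nonpos hT (by linarith) (by linarith))
      (by positivity)
  · linarith [(div_lt_iff₀ hb).mp hdγ]
  · intro y (hy : 1 < y)
    have hy₀ : 0 < y := one_pos.trans hy
    have hyb : 0 < y ^ b := rpow_pos_of_pos hy₀ b
    rw [norm_of_nonneg (by positivity)]
    calc (T + y ^ b) ^ (-γ) * y ^ (d - 1) ≤ (y ^ b) ^ (-γ) * y ^ (d - 1) :=
          mul_le_mul_of_nonneg_right
            (rpow_le_rpow_of_nonpos hyb (by linarith) (by linarith)) (by positivity)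
      _ = y ^ (d - 1 - b * γ) := by
          rw [← rpow_mul hy₀.le, ← rpow_add hy₀]
          ring_nf

lemma integral_Ioi_add_rpow_neg_mul_rpow {b d γ T : ℝ} (hb : b ≠ 0) (hT : 0 < T) :
    ∫ y in Ioi 0, (T + y ^ b) ^ (-γ) * y ^ (d - 1) =
      T ^ (d / b - γ) * ∫ z in Ioi 0, (1 + z ^ b) ^ (-γ) * z ^ (d - 1) := by
  set σ := T ^ (1 / b)
  have hσ : 0 < σ := rpow_pos_of_pos hT _
  have hσb : σ ^ b = T := by rw [← rpow_mul hT.le, one_div_mul_cancel hb, rpow_one]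
  have hscale : ∀ z ∈ Ioi (0 : ℝ), (T + (σ * z) ^ b) ^ (-γ) * (σ * z) ^ (d - 1) =
      T ^ (-γ) * σ ^ (d - 1) * ((1 + z ^ b) ^ (-γ) * z ^ (d - 1)) := by
    intro z (hz : 0 < z)
    rw [mul_rpow hσ.le hz.le, mul_rpow hσ.le hz.le, hσb,
      show T + T * z ^ b = T * (1 + z ^ b) by ring, mul_rpow hT.le (by positivity)]
    ring
  have hsub := integral_comp_mul_left_Ioi (fun y => (T + y ^ b) ^ (-γ) * y ^ (d - 1)) 0 hσ
  rw [mul_zero, setIntegral_congr_fun measurableSet_Ioi hscale, integral_const_mul,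
    smul_eq_mul] at hsub
  have hexp : T ^ (d / b - γ) = σ * (T ^ (-γ) * σ ^ (d - 1)) := by
    rw [mul_left_comm, mul_comm σ, ← rpow_add_one hσ.ne', sub_add_cancel, ← rpow_mul hT.le,
      ← rpow_add hT, one_div_mul_eq_div, sub_eq_neg_add]
  rw [hexp, mul_assoc, hsub, mul_inv_cancel_left₀ hσ.ne']

lemma integrableOn_Ioi_one_inv_mul_one_add_log_rpow_neg {δ : ℝ} (hδ : 1 < δ) :
    IntegrableOn (fun x : ℝ => x⁻¹ * (1 + log x) ^ (-δ)) (Ioi 1) := by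
  have hpow : IntegrableOn (fun t : ℝ => (t + 1) ^ (-δ)) (Ioi (log 1)) := by
    rw [log_one]
    exact integrableOn_add_rpow_Ioi_of_lt (by linarith) (by norm_num)
  simpa [add_comm] using (integrableOn_comp_log_Ioi _ one_pos).2 hpow

lemma one_add_log_rpow_neg_antitoneOn {δ : ℝ} (hδ : 0 ≤ δ) :
    AntitoneOn (fun t : ℝ => (1 + log t) ^ (-δ)) (Ici 1) := by
  intro s (hs : 1 ≤ s) t _ hst
  have hlog : 0 ≤ log s := log_nonneg hs
  exact rpow_le_rpow_of_nonpos (by linarith) (by gcongr) (by linarith)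

lemma integrableOn_Ioi_rpow_mul_one_add_rpow_neg_mul_one_add_log_rpow_neg {a c δ : ℝ}
    (ha : 0 < a) (hc : 0 < c) (hδ : 1 < δ) :
    IntegrableOn (fun x : ℝ => x ^ (c - 1) * (1 + x ^ a) ^ (-(c / a)) *
      (1 + log (1 + x ^ a)) ^ (-δ)) (Ioi 0) := by
  have hca : 0 < c / a := div_pos hc ha
  set m := min a 1
  have hm : 0 < m := lt_min ha one_pos
  refine integrableOn_Ioi_zero_of_le_rpow_of_le hc (by fun_prop) (C := 1) ?_
    ((integrableOn_Ioi_one_inv_mul_one_add_log_rpow_neg hδ).const_mul (m ^ (-δ))) ?_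
  · intro x ⟨hx, _⟩
    have hxa : 0 ≤ x ^ a := rpow_nonneg hx.le a
    have hlog : 0 ≤ log (1 + x ^ a) := log_nonneg (by linarith)
    rw [norm_of_nonneg (by positivity), one_mul]
    calc x ^ (c - 1) * (1 + x ^ a) ^ (-(c / a)) * (1 + log (1 + x ^ a)) ^ (-δ)
        ≤ x ^ (c - 1) * 1 * 1 := by
          gcongr
          · exact rpow_le_one_of_one_le_of_nonpos (by linarith) (by linarith)
          · exact rpow_le_one_of_one_le_of_nonpos (by linarith) (by linarith)
      _ = x ^ (c - 1) := by ring
  · intro x (hx : 1 < x)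
    have hx₀ : 0 < x := one_pos.trans hx
    have hxa : 0 < x ^ a := rpow_pos_of_pos hx₀ a
    have hlogx : 0 ≤ log x := log_nonneg hx.le
    have hlog : 0 ≤ log (1 + x ^ a) := log_nonneg (by linarith)
    rw [norm_of_nonneg (by positivity)]
    have hpow : x ^ (c - 1) * (1 + x ^ a) ^ (-(c / a)) ≤ x⁻¹ :=
      calc x ^ (c - 1) * (1 + x ^ a) ^ (-(c / a)) ≤ x ^ (c - 1) * (x ^ a) ^ (-(c / a)) :=
            mul_le_mul_of_nonneg_left
              (rpow_le_rpow_of_nonpos hxa (by linarith) (by linarith)) (by positivity)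
        _ = x⁻¹ := by
            rw [← rpow_mul hx₀.le, ← rpow_add hx₀, mul_neg, mul_div_cancel₀ c ha.ne',
              show c - 1 + -c = -1 by ring, rpow_neg_one]
    have hlog_ge : m * (1 + log x) ≤ 1 + log (1 + x ^ a) := by
      have : a * log x ≤ log (1 + x ^ a) := by
        rw [← log_rpow hx₀]
        exact log_le_log hxa (by linarith)
      nlinarith [min_le_left a 1, min_le_right a 1]
    calc x ^ (c - 1) * (1 + x ^ a) ^ (-(c / a)) * (1 + log (1 + x ^ a)) ^ (-δ)
        ≤ x⁻¹ * (m * (1 + log x)) ^ (-δ) :=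
          mul_le_mul hpow (rpow_le_rpow_of_nonpos (by positivity) hlog_ge (by linarith))
            (by positivity) (by positivity)
      _ = m ^ (-δ) * (x⁻¹ * (1 + log x) ^ (-δ)) := by
          rw [mul_rpow hm.le (by linarith)]
          ring

lemma integrable_prod_of_norm_le_of_integrable_integral {α β E : Type*} [MeasurableSpace α]
    [MeasurableSpace β] [NormedAddCommGroup E] {μ : Measure α} {ν : Measure β} [SFinite ν]
    {f : α × β → E} {g : α → β → ℝ} (hf : AEStronglyMeasurable f (μ.prod ν))
    (hfg : ∀ᵐ x ∂μ, ∀ᵐ y ∂ν, ‖f (x, y)‖ ≤ g x y)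
    (hg : ∀ᵐ x ∂μ, Integrable (g x) ν)
    (hG : Integrable (fun x => ∫ y, g x y ∂ν) μ) :
    Integrable f (μ.prod ν) := by
  refine (integrable_prod_iff hf).2 ⟨?_, ?_⟩
  · filter_upwards [hfg, hg, hf.prodMk_left] with x hfgx hgx hfx
    exact hgx.mono' hfx hfgx
  · refine hG.mono' hf.norm.integral_prod_right' ?_
    filter_upwards [hfg, hg, hf.prodMk_left] with x hfgx hgx hfx
    rw [norm_of_nonneg (integral_nonneg fun y => norm_nonneg _)]
    exact integral_mono_ae (hgx.mono' hfx hfgx).norm hgx hfgx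

theorem integrable_rpow_log_double_general (a b c d γ δ : ℝ) (ha : 0 < a) (hb : 0 < b)
    (hc : 0 < c) (hd : 0 < d) (hδ : 1 < δ) (h : c / a + d / b = γ) :
    IntegrableOn
      (fun z : ℝ × ℝ =>
        (1 + z.1 ^ a + z.2 ^ b) ^ (-γ) *
          (1 + Real.log (1 + z.1 ^ a + z.2 ^ b)) ^ (-δ) *
          z.1 ^ (c - 1) * z.2 ^ (d - 1))
      (Ioi (0:ℝ) ×ˢ Ioi (0:ℝ)) := by
  have hdγ : d / b < γ := by linarith [div_pos hc ha]
  rw [IntegrableOn, Measure.volume_eq_prod, ← Measure.prod_restrict]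
  refine integrable_prod_of_norm_le_of_integrable_integral (by fun_prop)
    (g := fun x y => x ^ (c - 1) * (1 + log (1 + x ^ a)) ^ (-δ) *
      ((1 + x ^ a + y ^ b) ^ (-γ) * y ^ (d - 1))) ?_ ?_ ?_
  · filter_upwards [ae_restrict_mem measurableSet_Ioi] with x (hx : 0 < x)
    filter_upwards [ae_restrict_mem measurableSet_Ioi] with y (hy : 0 < y)
    have hxa : 0 ≤ x ^ a := rpow_nonneg hx.le a
    have hyb : 0 ≤ y ^ b := rpow_nonneg hy.le b
    have hlog : 0 ≤ log (1 + x ^ a + y ^ b) := log_nonneg (by linarith)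
    have hlog_le : (1 + log (1 + x ^ a + y ^ b)) ^ (-δ) ≤ (1 + log (1 + x ^ a)) ^ (-δ) :=
      one_add_log_rpow_neg_antitoneOn (by linarith) (by simpa using hxa)
        (by simp only [mem_Ici]; linarith) (by linarith)
    rw [norm_of_nonneg (by positivity)]
    calc _ = x ^ (c - 1) * (1 + log (1 + x ^ a + y ^ b)) ^ (-δ) *
          ((1 + x ^ a + y ^ b) ^ (-γ) * y ^ (d - 1)) := by ring
      _ ≤ _ := mul_le_mul_of_nonneg_right (mul_le_mul_of_nonneg_left hlog_le (by positivity))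
          (by positivity)
  · filter_upwards [ae_restrict_mem measurableSet_Ioi] with x (hx : 0 < x)
    exact (integrableOn_Ioi_add_rpow_neg_mul_rpow hb hd hdγ (by positivity)).const_mul _
  · have houter := (integrableOn_Ioi_rpow_mul_one_add_rpow_neg_mul_one_add_log_rpow_neg ha hc hδ)
      |>.const_mul (∫ z in Ioi 0, (1 + z ^ b) ^ (-γ) * z ^ (d - 1))
    refine houter.congr ?_
    filter_upwards [ae_restrict_mem measurableSet_Ioi] with x (hx : 0 < x)
    rw [integral_const_mul,
      integral_Ioi_add_rpow_neg_mul_rpow (T := 1 + x ^ a) hb.ne' (by positivity),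
      show d / b - γ = -(c / a) by linarith]
    ring

/-- if `a,b,c,d,γ > 0`, `δ > 1` and `c/a + d/b = γ`, then
`∫₀^∞∫₀^∞ (1+x^a+y^b)^(-γ) (1+log(1+x^a+y^b))^(-δ) x^(c-1) y^(d-1) dx dy < ∞`. -/
theorem integrable_rpow_log_double (a b c d γ δ : ℝ) (ha : 0 < a) (hb : 0 < b)
    (hc : 0 < c) (hd : 0 < d) (hγ : 0 < γ) (hδ : 1 < δ) (h : c / a + d / b = γ) :
    IntegrableOn
      (fun z : ℝ × ℝ =>
        (1 + z.1 ^ a + z.2 ^ b) ^ (-γ) *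
          (1 + Real.log (1 + z.1 ^ a + z.2 ^ b)) ^ (-δ) *
          z.1 ^ (c - 1) * z.2 ^ (d - 1))
      (Ioi (0:ℝ) ×ˢ Ioi (0:ℝ)) :=
  integrable_rpow_log_double_general a b c d γ δ ha hb hc hd hδ h
end

section
/- Let p > 1, q ≥ 1 with p + q > 3, set ρ = (p+q−1)/2, and let 0 < ν ≤ (p+q−3)/2. Then the integral ∫₀^∞ ∫₀^∞ (y² + (1 + (1/2)(x² − y²))²)^(−(ρ+ν)/2) x^(p−2) y^(q−1) dx dy diverges (equals +∞). -/
/-!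
On the unit square `[n + 1, n + 2)²` one has `|x² - y²| ≤ 2n + 3`, so the base
`y² + (1 + (x² - y²)/2)²` is at most `4 (n + 2)²`, while `x, y ≥ (n + 2)/2`. Hence the integrand
is at least a constant times `(n + 2) ^ (p + q - 3 - (ρ + ν))`, which is `≥ (n + 2)⁻¹` exactly when
`ν ≤ (p + q - 3)/2`: these disjoint squares contribute a harmonic series.
-/

open Real MeasureTheory Set Function
open scoped ENNReal

theorem setLIntegral_eq_top_of_pairwise_disjoint {α : Type*} [MeasurableSpace α]
    {μ : Measure α} {f : α → ℝ≥0∞} {s : Set α} {R : ℕ → Set α} {g : ℕ → ℝ≥0∞}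
    (hRm : ∀ n, MeasurableSet (R n)) (hR : Pairwise (Disjoint on R)) (hRs : ∀ n, R n ⊆ s)
    (hμR : ∀ n, μ (R n) = 1) (hgf : ∀ n, ∀ x ∈ R n, g n ≤ f x) (hg : ∑' n, g n = ∞) :
    ∫⁻ x in s, f x ∂μ = ∞ :=
  eq_top_iff.2 <| calc
    ∞ = ∑' n, ∫⁻ _ in R n, g n ∂μ := by simp only [setLIntegral_const, hμR, mul_one, hg]
    _ ≤ ∑' n, ∫⁻ x in R n, f x ∂μ :=
      ENNReal.tsum_le_tsum fun n => setLIntegral_mono' (hRm n) (hgf n)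
    _ = ∫⁻ x in ⋃ n, R n, f x ∂μ := (lintegral_iUnion hRm hR f).symm
    _ ≤ ∫⁻ x in s, f x ∂μ := lintegral_mono_set (iUnion_subset hRs)

theorem tsum_ofReal_mul_inv_nat_add_two_eq_top {c : ℝ} (hc : 0 < c) :
    ∑' n : ℕ, ENNReal.ofReal (c * ((n : ℝ) + 2)⁻¹) = ∞ := by
  by_contra h
  have hsum : Summable fun n : ℕ => c * ((n : ℝ) + 2)⁻¹ :=
    (ENNReal.summable_toReal h).congr fun n => ENNReal.toReal_ofReal (by positivity)
  rw [summable_mul_left_iff hc.ne'] at hsum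
  refine Real.not_summable_natCast_inv ((summable_nat_add_iff 2).1 ?_)
  simpa only [Nat.cast_add, Nat.cast_ofNat] using hsum

def diagSquare (n : ℕ) : Set (ℝ × ℝ) :=
  Ico ((n : ℝ) + 1) (n + 2) ×ˢ Ico ((n : ℝ) + 1) (n + 2)

theorem measurableSet_diagSquare (n : ℕ) : MeasurableSet (diagSquare n) :=
  measurableSet_Ico.prod measurableSet_Ico

theorem volume_diagSquare (n : ℕ) : volume (diagSquare n) = 1 := by
  rw [diagSquare, Measure.volume_eq_prod, Measure.prod_prod, Real.volume_Ico]
  norm_num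

theorem pairwise_disjoint_diagSquare : Pairwise (Disjoint on diagSquare) := by
  refine (pairwise_disjoint_on _).2 fun m n hmn => ?_
  have : (m : ℝ) + 1 ≤ n := by exact_mod_cast hmn
  exact Set.disjoint_prod.2 <| Or.inl <| Ico_disjoint_Ico.2 <|
    min_le_of_left_le <| le_max_of_le_right <| by linarith

theorem diagSquare_subset (n : ℕ) : diagSquare n ⊆ Ioi (0 : ℝ) ×ˢ Ioi (0 : ℝ) := by
  have : (0 : ℝ) < n + 1 := by positivity
  exact prod_mono (fun x hx => lt_of_lt_of_le this hx.1) (fun y hy => lt_of_lt_of_le this hy.1)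

/-- With `s = (ρ + ν)/2`, `a = p - 2`, `b = q - 1` this is the integrand of the theorem. -/
noncomputable def radonIntegrand (s a b : ℝ) (z : ℝ × ℝ) : ℝ :=
  (z.2 ^ 2 + (1 + (1 / 2) * (z.1 ^ 2 - z.2 ^ 2)) ^ 2) ^ (-s) * z.1 ^ a * z.2 ^ b

theorem radon_base_le_four_mul_sq {u x y : ℝ} (hu : 1 ≤ u) (hx : x ∈ Icc (u - 1) u)
    (hy : y ∈ Icc (u - 1) u) : y ^ 2 + (1 + (1 / 2) * (x ^ 2 - y ^ 2)) ^ 2 ≤ 4 * u ^ 2 := by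
  obtain ⟨hx₁, hx₂⟩ := hx
  obtain ⟨hy₁, hy₂⟩ := hy
  have hy_sq : y ^ 2 ≤ u ^ 2 := by nlinarith
  have hcross_sq : (1 + (1 / 2) * (x ^ 2 - y ^ 2)) ^ 2 ≤ (u + 1 / 2) ^ 2 :=
    sq_le_sq' (by nlinarith) (by nlinarith)
  nlinarith

theorem mul_inv_le_radonIntegrand {s a b u : ℝ} (hs : 0 ≤ s) (ha : 0 ≤ a) (hb : 0 ≤ b)
    (hsab : 2 * s ≤ a + b + 1) (hu : 2 ≤ u) {z : ℝ × ℝ} (hx : z.1 ∈ Icc (u - 1) u)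
    (hy : z.2 ∈ Icc (u - 1) u) :
    4 ^ (-s) / 2 ^ (a + b) * u⁻¹ ≤ radonIntegrand s a b z := by
  obtain ⟨x, y⟩ := z
  have hu₀ : 0 < u := by linarith
  have hx₀ : 0 < x := by linarith [hx.1]
  have hy₀ : 0 < y := by linarith [hy.1]
  have hbase : (4 * u ^ 2) ^ (-s) ≤ (y ^ 2 + (1 + (1 / 2) * (x ^ 2 - y ^ 2)) ^ 2) ^ (-s) :=
    rpow_le_rpow_of_nonpos (by positivity) (radon_base_le_four_mul_sq (by linarith) hx hy)
      (by linarith)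
  have hmonomial : (u / 2) ^ (a + b) ≤ x ^ a * y ^ b := by
    have : u / 2 ≤ x := by linarith [hx.1]
    have : u / 2 ≤ y := by linarith [hy.1]
    rw [rpow_add (half_pos hu₀)]
    gcongr
  have hdecay : u⁻¹ ≤ u ^ (a + b - 2 * s) := by
    rw [← rpow_neg_one]
    exact rpow_le_rpow_of_exponent_le (by linarith) (by linarith)
  calc 4 ^ (-s) / 2 ^ (a + b) * u⁻¹ ≤ 4 ^ (-s) / 2 ^ (a + b) * u ^ (a + b - 2 * s) := by
        gcongr
    _ = (4 * u ^ 2) ^ (-s) * (u / 2) ^ (a + b) := by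
        rw [mul_rpow (by norm_num) (by positivity), div_rpow hu₀.le (by norm_num),
          ← rpow_natCast_mul hu₀.le, rpow_sub hu₀, Nat.cast_ofNat, mul_neg, rpow_neg hu₀.le]
        field_simp
    _ ≤ (y ^ 2 + (1 + (1 / 2) * (x ^ 2 - y ^ 2)) ^ 2) ^ (-s) * (x ^ a * y ^ b) := by
        gcongr
    _ = radonIntegrand s a b (x, y) := by
        rw [radonIntegrand, mul_assoc]

theorem setLIntegral_radonIntegrand_eq_top {s a b : ℝ} (hs : 0 ≤ s) (ha : 0 ≤ a) (hb : 0 ≤ b)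
    (hsab : 2 * s ≤ a + b + 1) :
    ∫⁻ z in Ioi (0 : ℝ) ×ˢ Ioi (0 : ℝ), ENNReal.ofReal (radonIntegrand s a b z) = ∞ := by
  have hc : (0 : ℝ) < 4 ^ (-s) / 2 ^ (a + b) := by positivity
  refine setLIntegral_eq_top_of_pairwise_disjoint measurableSet_diagSquare
    pairwise_disjoint_diagSquare diagSquare_subset volume_diagSquare
    (fun n z hz => ENNReal.ofReal_le_ofReal ?_) (tsum_ofReal_mul_inv_nat_add_two_eq_top hc)
  obtain ⟨⟨hx₁, hx₂⟩, ⟨hy₁, hy₂⟩⟩ := hz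
  exact mul_inv_le_radonIntegrand hs ha hb hsab (le_add_of_nonneg_left n.cast_nonneg)
    ⟨by linarith, hx₂.le⟩ ⟨by linarith, hy₂.le⟩

theorem radon_integral_diverges_general (p q : ℕ) (hp : 1 < p) (hq : 1 ≤ q)
    (ν : ℝ) (hν : 0 < ν) (hν' : ν ≤ ((p:ℝ) + q - 3) / 2) :
    ∫⁻ z in Ioi (0:ℝ) ×ˢ Ioi (0:ℝ),
        ENNReal.ofReal
          ((z.2 ^ 2 + (1 + (1 / 2) * (z.1 ^ 2 - z.2 ^ 2)) ^ 2)
              ^ (-((((p:ℝ) + q - 1) / 2 + ν) / 2)) *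
            z.1 ^ ((p:ℝ) - 2) * z.2 ^ ((q:ℝ) - 1))
      = ⊤ := by
  have hp' : (2 : ℝ) ≤ p := by exact_mod_cast hp
  have hq' : (1 : ℝ) ≤ q := by exact_mod_cast hq
  exact setLIntegral_radonIntegrand_eq_top (by linarith) (by linarith) (by linarith) (by linarith)

/-- for `p > 1`, `q ≥ 1`, `p + q > 3`, `ρ = (p+q-1)/2` and
`0 < ν ≤ (p+q-3)/2`, the integral
`∫₀^∞∫₀^∞ (y² + (1 + (1/2)(x²-y²))²)^(-(ρ+ν)/2) x^(p-2) y^(q-1) dx dy`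
diverges. -/
theorem radon_integral_diverges (p q : ℕ) (hp : 1 < p) (hq : 1 ≤ q)
    (hpq : 3 < p + q) (ν : ℝ) (hν : 0 < ν) (hν' : ν ≤ ((p:ℝ) + q - 3) / 2) :
    ∫⁻ z in Ioi (0:ℝ) ×ˢ Ioi (0:ℝ),
        ENNReal.ofReal
          ((z.2 ^ 2 + (1 + (1 / 2) * (z.1 ^ 2 - z.2 ^ 2)) ^ 2)
              ^ (-((((p:ℝ) + q - 1) / 2 + ν) / 2)) *
            z.1 ^ ((p:ℝ) - 2) * z.2 ^ ((q:ℝ) - 1))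
      = ⊤ :=
  radon_integral_diverges_general p q hp hq ν hν hν'
end
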